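/- If f : ℂⁿ → ℂ is holomorphic and x : (0,ε) → ℂⁿ is a differentiable curve satisfying grad_f(x(τ)) = λ(τ)·x(τ) for a function λ : (0,ε) → ℂ, where grad_f denotes the conjugate gradient, then (d/dτ) f(x(τ)) equals the conjugate of λ(τ) times the Hermitian inner product ⟨dx/dτ, x(τ)⟩, and consequently |λ(τ)| · (d/dτ)‖x(τ)‖² ≤ 2 |(d/dτ) f(x(τ))| whenever (d/dτ)‖x(τ)‖² > 0. -/

import Mathlib

open Set

/-- If f : ℂⁿ → ℂ is holomorphic and x : (0,ε) → ℂⁿ is a differentiable curve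
satisfying grad_f(x(τ)) = λ(τ)·x(τ)  (grad_f being the conjugate (Milnor)
gradient), then df(x(τ))/dτ = conj(λ(τ))·⟨dx/dτ, x(τ)⟩ (Hermitian inner
product, linear in the first slot) and |λ(τ)|·(d/dτ)‖x(τ)‖² ≤ 2|df(x(τ))/dτ|
whenever (d/dτ)‖x(τ)‖² > 0. -/
theorem milnor_gradient_curve_estimate
    {n : ℕ} (f : EuclideanSpace ℂ (Fin n) → ℂ) (hf : Differentiable ℂ f)
    (ε : ℝ) (x : ℝ → EuclideanSpace ℂ (Fin n)) (lam : ℝ → ℂ)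
    (hx : ∀ τ ∈ Ioo (0 : ℝ) ε, DifferentiableAt ℝ x τ)
    (hgrad : ∀ τ ∈ Ioo (0 : ℝ) ε,
      (fun i => (starRingEnd ℂ) (fderiv ℂ f (x τ) (EuclideanSpace.single i 1)))
        = fun i => lam τ * x τ i) :
    ∀ τ ∈ Ioo (0 : ℝ) ε,
      deriv (fun s => f (x s)) τ
          = (starRingEnd ℂ) (lam τ) * (inner ℂ (x τ) (deriv x τ) : ℂ) ∧
      (0 < deriv (fun s => ‖x s‖ ^ 2) τ →
        ‖lam τ‖ * deriv (fun s => ‖x s‖ ^ 2) τ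
          ≤ 2 * ‖deriv (fun s => f (x s)) τ‖) := by
  intro τ hτ
  have hxd := (hx τ hτ).hasDerivAt
  set v := deriv x τ with hv
  -- chain rule
  have hchain : HasDerivAt (fun s => f (x s)) (fderiv ℂ f (x τ) v) τ := by
    have := ((hf (x τ)).hasFDerivAt.restrictScalars ℝ).comp_hasDerivAt τ hxd
    exact this
  have hderiv : deriv (fun s => f (x s)) τ = fderiv ℂ f (x τ) v := hchain.deriv
  -- expand v in the standard basis
  have hvsum : v = ∑ i, v i • EuclideanSpace.single i (1 : ℂ) := by
    have h := (EuclideanSpace.basisFun (Fin n) ℂ).sum_repr v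
    simpa [EuclideanSpace.basisFun_apply, EuclideanSpace.basisFun_repr] using h.symm
  have hcoord : ∀ i, fderiv ℂ f (x τ) (EuclideanSpace.single i (1 : ℂ))
      = (starRingEnd ℂ) (lam τ * x τ i) := by
    intro i
    have := congrFun (hgrad τ hτ) i
    simpa using congrArg (starRingEnd ℂ) this
  have hmain : deriv (fun s => f (x s)) τ
      = (starRingEnd ℂ) (lam τ) * (inner ℂ (x τ) v : ℂ) := by
    rw [hderiv]
    conv_lhs => rw [hvsum]
    rw [map_sum]
    simp only [map_smul, hcoord, smul_eq_mul, map_mul]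
    rw [PiLp.inner_apply, Finset.mul_sum]
    congr 1
    ext i
    simp [RCLike.inner_apply]
    ring
  refine ⟨hmain, ?_⟩
  -- derivative of the squared norm
  have hnsq : HasDerivAt (fun s => ‖x s‖ ^ 2) (2 * (inner ℝ (x τ) v : ℝ)) τ :=
    hxd.norm_sq
  have hnd : deriv (fun s => ‖x s‖ ^ 2) τ = 2 * (inner ℝ (x τ) v : ℝ) := hnsq.deriv
  have hre : (inner ℝ (x τ) v : ℝ) = (inner ℂ (x τ) v : ℂ).re := by
    rw [PiLp.inner_apply, PiLp.inner_apply, Complex.re_sum]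
    simp [Complex.inner]
  intro hpos
  rw [hnd, hre, hmain]
  have h1 : (inner ℂ (x τ) v : ℂ).re ≤ ‖(inner ℂ (x τ) v : ℂ)‖ :=
    Complex.re_le_norm _
  have h2 : ‖(starRingEnd ℂ) (lam τ) * (inner ℂ (x τ) v : ℂ)‖
      = ‖lam τ‖ * ‖(inner ℂ (x τ) v : ℂ)‖ := by
    rw [norm_mul, RCLike.norm_conj]
  rw [h2]
  have hl : 0 ≤ ‖lam τ‖ := norm_nonneg _
  nlinarith [norm_nonneg (inner ℂ (x τ) v : ℂ)]
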